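/- arXiv:1911.06561 — 5 statements merged into one kernel-verified Lean document; each statement's English description precedes it below -/
import Mathlib

section
/- For every q ≥ 3 and every β ∈ [0,1], ι_q ≥ H(β)/(1 + 2β), where H(β) = −β log₂ β − (1−β) log₂(1−β) is the binary entropy function (with H(0) = H(1) = 0). -/
/-- A single tandem duplication of length `k`: `u ++ v ++ w ↦ u ++ v ++ v ++ w` with `|v| = k`. -/
def DupStepLen (q k : ℕ) (x y : List (Fin q)) : Prop :=
  ∃ u v w : List (Fin q), v.length = k ∧ x = u ++ v ++ w ∧ y = u ++ v ++ v ++ w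

/-- `DescL q ks x y`: `y` is obtained from `x` by successive tandem duplications whose
lengths are given by the list `ks`. -/
def DescL (q : ℕ) : List ℕ → List (Fin q) → List (Fin q) → Prop
  | [], x, y => y = x
  | k :: ks, x, y => ∃ z, DupStepLen q k x z ∧ DescL q ks z y

/-- `y ∈ D^t(x)`: `y` is obtained from `x` by `t` tandem duplications, each of length ≤ 3. -/
def DescT (q t : ℕ) (x y : List (Fin q)) : Prop :=
  ∃ ks : List ℕ, ks.length = t ∧ (∀ k ∈ ks, 1 ≤ k ∧ k ≤ 3) ∧ DescL q ks x y

/-- `y` is obtained from `x` by `t` tandem duplications of length ≤ 3, exactly `b` of which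
have length 3. -/
def DescTB (q t b : ℕ) (x y : List (Fin q)) : Prop :=
  ∃ ks : List ℕ, ks.length = t ∧ (∀ k ∈ ks, 1 ≤ k ∧ k ≤ 3) ∧ ks.count 3 = b ∧ DescL q ks x y

/-- `y ∈ D*(x)`: `y` is a descendant of `x` under tandem duplications of length ≤ 3. -/
def Desc (q : ℕ) (x y : List (Fin q)) : Prop := ∃ t, DescT q t x y

/-- Two strings are confusable iff they have a common descendant. -/
def Confusable (q : ℕ) (x y : List (Fin q)) : Prop := ∃ z, Desc q x z ∧ Desc q y z

/-- A zero-error code: a set of pairwise non-confusable strings. -/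
def ZeroErrorCode (q : ℕ) (C : Set (List (Fin q))) : Prop :=
  ∀ x ∈ C, ∀ y ∈ C, x ≠ y → ¬ Confusable q x y

/-- A string is irreducible if it contains no substring `a·a`, `a·b·a·b`, or `a·b·c·a·b·c`. -/
def IrreducibleStr (q : ℕ) (x : List (Fin q)) : Prop :=
  (∀ a : Fin q, ¬ [a, a] <:+: x) ∧
  (∀ a b : Fin q, ¬ [a, b, a, b] <:+: x) ∧
  (∀ a b c : Fin q, ¬ [a, b, c, a, b, c] <:+: x)

/-- `I_q(n)`: the number of irreducible strings of length `n` over the alphabet `A_q`. -/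
noncomputable def IrrCount (q n : ℕ) : ℕ :=
  Set.ncard {x : List (Fin q) | x.length = n ∧ IrreducibleStr q x}

/-- The binary entropy function in base 2 (with `H(0) = H(1) = 0`, since `logb 2 0 = 0`). -/
noncomputable def binH (β : ℝ) : ℝ :=
  -β * Real.logb 2 β - (1 - β) * Real.logb 2 (1 - β)


/-! ### Auxiliary development -/

instance (q : ℕ) (x : List (Fin q)) : Decidable (IrreducibleStr q x) := by
  unfold IrreducibleStr; infer_instance

namespace IotaAux

/-- Emission table: state (last five letters, most recent first) and a bit to a block
(prepended, in reverse emission order). -/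
def emit2 (t : List (Fin 3)) (b : Bool) : List (Fin 3) :=
  match t.map Fin.val, b with
  | [0,1,2,1,0], false => [2]
  | [0,1,2,1,0], true  => [2,1]
  | [0,2,1,2,0], false => [1]
  | [0,2,1,2,0], true  => [1,2]
  | [1,0,2,0,1], false => [2]
  | [1,0,2,0,1], true  => [2,0]
  | [1,2,0,2,1], false => [0]
  | [1,2,0,2,1], true  => [0,2]
  | [2,0,1,0,2], false => [1]
  | [2,0,1,0,2], true  => [1,0]
  | [2,1,0,1,2], false => [0]
  | [2,1,0,1,2], true  => [0,1]
  | [1,2,0,1,0], false => [0,2]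
  | [1,2,0,1,0], true  => [2,1,0]
  | [2,1,0,2,0], false => [0,1]
  | [2,1,0,2,0], true  => [1,2,0]
  | [0,2,1,0,1], false => [1,2]
  | [0,2,1,0,1], true  => [2,0,1]
  | [2,0,1,2,1], false => [1,0]
  | [2,0,1,2,1], true  => [0,2,1]
  | [0,1,2,0,2], false => [2,1]
  | [0,1,2,0,2], true  => [1,0,2]
  | [1,0,2,1,2], false => [2,0]
  | [1,0,2,1,2], true  => [0,1,2]
  | _, _ => []

/-- Branch states of the two types (`true` = type A, `false` = type B). -/
def stL : Bool → List (List (Fin 3))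
  | true => [[0,1,2,1,0],[0,2,1,2,0],[1,0,2,0,1],[1,2,0,2,1],[2,0,1,0,2],[2,1,0,1,2]]
  | false => [[1,2,0,1,0],[2,1,0,2,0],[0,2,1,0,1],[2,0,1,2,1],[0,1,2,0,2],[1,0,2,1,2]]

def nextT : Bool → Bool → Bool
  | true, false => false
  | true, true => true
  | false, _ => true

def blockLen : Bool → Bool → ℕ
  | true, false => 1
  | true, true => 2
  | false, false => 2
  | false, true => 3

def Good (T : Bool) (w : List (Fin 3)) : Prop :=
  w.take 5 ∈ stL T ∧ IrreducibleStr 3 w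

def enc : List (Fin 3) → List Bool → List (Fin 3)
  | w, [] => w
  | w, b :: s => enc (emit2 (w.take 5) b ++ w) s

def G : Bool → ℕ → Finset (List Bool)
  | true, 0 => {[]}
  | true, 1 => {[false]}
  | true, (n+2) => (G false (n+1)).image (false :: ·) ∪ (G true n).image (true :: ·)
  | false, 0 => {[]}
  | false, 1 => ∅
  | false, 2 => {[false]}
  | false, (n+3) => (G true (n+1)).image (false :: ·) ∪ (G true n).image (true :: ·)
  termination_by T n => n

lemma stL_len : ∀ T : Bool, ∀ st ∈ stL T, st.length = 5 := by decide

lemma tableFacts : ∀ T : Bool, ∀ st ∈ stL T, ∀ b : Bool,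
    IrreducibleStr 3 (emit2 st b ++ st) ∧
    (emit2 st b ++ st).take 5 ∈ stL (nextT T b) ∧
    (emit2 st b).length = blockLen T b := by decide

lemma lastFacts : ∀ T : Bool, ∀ st ∈ stL T,
    ∃ x y : Fin 3, (emit2 st false).getLast? = some x ∧
      (emit2 st true).getLast? = some y ∧ x ≠ y := by decide

lemma infix_split {q : ℕ} {p e w : List (Fin q)} (hp : p.length ≤ 6) (h : p <:+: e ++ w) :
    p <:+: e ++ w.take 5 ∨ p <:+: w := by
  obtain ⟨s, t, hst⟩ := h
  by_cases hcase : s.length + p.length ≤ e.length + 5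
  · left
    have h1 : (e ++ w).take (s.length + p.length) = s ++ p := by
      rw [← hst, List.append_assoc, List.take_append]
      simp
    have h2 : (e ++ w).take (e.length + 5) = e ++ w.take 5 := by
      rw [List.take_append]
      simp [List.take_of_length_le (by omega : e.length ≤ e.length + 5)]
    have h3 : s ++ p <+: e ++ w.take 5 := by
      rw [← h2, ← h1]
      have : (e ++ w).take (s.length + p.length) =
          ((e ++ w).take (e.length + 5)).take (s.length + p.length) := by
        rw [List.take_take, min_eq_left hcase]
      rw [this]
      exact List.take_prefix _ _
    exact (List.suffix_append s p).isInfix.trans h3.isInfix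
  · right
    have hs : e.length ≤ s.length := by omega
    have hd : (s ++ p ++ t).drop e.length = s.drop e.length ++ (p ++ t) := by
      rw [List.append_assoc, List.drop_append]
      simp [Nat.sub_eq_zero_of_le hs]
    have : w = s.drop e.length ++ (p ++ t) := by
      rw [← hd, hst, List.drop_append]
      simp
    exact ⟨s.drop e.length, t, by rw [this, List.append_assoc]⟩

lemma irr_prepend {e w : List (Fin 3)} (hw : IrreducibleStr 3 w)
    (h : IrreducibleStr 3 (e ++ w.take 5)) : IrreducibleStr 3 (e ++ w) := by
  obtain ⟨h1, h2, h3⟩ := h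
  obtain ⟨g1, g2, g3⟩ := hw
  refine ⟨fun a ha => ?_, fun a b hab => ?_, fun a b c habc => ?_⟩
  · rcases infix_split (by simp) ha with h | h
    exacts [h1 a h, g1 a h]
  · rcases infix_split (by simp) hab with h | h
    exacts [h2 a b h, g2 a b h]
  · rcases infix_split (by simp) habc with h | h
    exacts [h3 a b c h, g3 a b c h]

lemma good_step {T : Bool} {w : List (Fin 3)} (hw : Good T w) (b : Bool) :
    Good (nextT T b) (emit2 (w.take 5) b ++ w) ∧
      (emit2 (w.take 5) b).length = blockLen T b := by
  obtain ⟨hmem, hirr⟩ := hw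
  obtain ⟨hi, ht, hl⟩ := tableFacts T _ hmem b
  have h5 : (5:ℕ) ≤ w.length := by
    have := stL_len T _ hmem
    simp at this
    omega
  have hel : (emit2 (w.take 5) b).length ≤ 3 := by
    rw [hl]; cases T <;> cases b <;> simp [blockLen]
  have htake : (emit2 (w.take 5) b ++ w).take 5 = (emit2 (w.take 5) b ++ w.take 5).take 5 := by
    rw [List.take_append, List.take_append]
    congr 1
    rw [List.take_take]
    congr 1
    omega
  refine ⟨⟨?_, ?_⟩, hl⟩
  · rw [htake]; exact ht
  · exact irr_prepend hirr hi

lemma G_zero (T : Bool) : G T 0 = {[]} := by cases T <;> rw [G]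

lemma nil_mem_G {T : Bool} {n : ℕ} (h : ([] : List Bool) ∈ G T n) : n = 0 := by
  match T, n with
  | true, 0 => rfl
  | false, 0 => rfl
  | true, 1 => rw [G] at h; simp at h
  | true, (n+2) => rw [G] at h; simp at h
  | false, 1 => rw [G] at h; simp at h
  | false, 2 => rw [G] at h; simp at h
  | false, (n+3) => rw [G] at h; simp at h

lemma cons_mem_G {T : Bool} {n : ℕ} {b : Bool} {t : List Bool} (h : b :: t ∈ G T n) :
    ∃ n', t ∈ G (nextT T b) n' ∧ n = n' + blockLen T b := by
  match T, n with
  | true, 0 => rw [G] at h; simp at h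
  | false, 0 => rw [G] at h; simp at h
  | false, 1 => rw [G] at h; simp at h
  | true, 1 =>
    rw [G] at h
    simp only [Finset.mem_singleton, List.cons.injEq] at h
    obtain ⟨rfl, rfl⟩ := h
    exact ⟨0, by rw [G_zero]; simp, rfl⟩
  | false, 2 =>
    rw [G] at h
    simp only [Finset.mem_singleton, List.cons.injEq] at h
    obtain ⟨rfl, rfl⟩ := h
    exact ⟨0, by rw [G_zero]; simp, rfl⟩
  | true, (n+2) =>
    rw [G] at h
    simp only [Finset.mem_union, Finset.mem_image, List.cons.injEq] at h
    rcases h with ⟨a, ha, rfl, rfl⟩ | ⟨a, ha, rfl, rfl⟩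
    · exact ⟨n+1, ha, rfl⟩
    · exact ⟨n, ha, rfl⟩
  | false, (n+3) =>
    rw [G] at h
    simp only [Finset.mem_union, Finset.mem_image, List.cons.injEq] at h
    rcases h with ⟨a, ha, rfl, rfl⟩ | ⟨a, ha, rfl, rfl⟩
    · exact ⟨n+1, ha, rfl⟩
    · exact ⟨n, ha, rfl⟩

lemma enc_spec : ∀ (s : List Bool) (T : Bool) (n : ℕ) (w : List (Fin 3)),
    Good T w → s ∈ G T n →
    IrreducibleStr 3 (enc w s) ∧ ∃ u : List (Fin 3), enc w s = u ++ w ∧ u.length = n := by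
  intro s
  induction s with
  | nil =>
    intro T n w hw hm
    exact ⟨hw.2, [], by simp [enc], by simp [nil_mem_G hm]⟩
  | cons b t ih =>
    intro T n w hw hm
    obtain ⟨n', hmem', hn⟩ := cons_mem_G hm
    obtain ⟨hg, hlb⟩ := good_step hw b
    obtain ⟨hirr, u, hu, hlen⟩ := ih _ n' _ hg hmem'
    refine ⟨hirr, u ++ emit2 (w.take 5) b, ?_, ?_⟩
    · show enc (emit2 (w.take 5) b ++ w) t = u ++ emit2 (w.take 5) b ++ w
      rw [hu, List.append_assoc]
    · simp [hlen, hlb, hn]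

lemma enc_inj : ∀ (s : List Bool) (T : Bool) (n : ℕ) (w : List (Fin 3)) (s' : List Bool),
    Good T w → s ∈ G T n → s' ∈ G T n → enc w s = enc w s' → s = s' := by
  intro s
  induction s with
  | nil =>
    intro T n w s' hw hm hm' he
    have h0 := nil_mem_G hm
    subst h0
    rw [G_zero] at hm'
    simp at hm'
    exact hm'.symm
  | cons b t ih =>
    intro T n w s' hw hm hm' he
    cases s' with
    | nil =>
      have h0 := nil_mem_G hm'
      subst h0
      rw [G_zero] at hm
      simp at hm
    | cons b' t' =>
      obtain ⟨n1, ht1, hn1⟩ := cons_mem_G hm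
      obtain ⟨n2, ht2, hn2⟩ := cons_mem_G hm'
      obtain ⟨hg1, _⟩ := good_step hw b
      obtain ⟨hg2, _⟩ := good_step hw b'
      obtain ⟨_, u1, hu1, hl1⟩ := enc_spec t _ n1 _ hg1 ht1
      obtain ⟨_, u2, hu2, hl2⟩ := enc_spec t' _ n2 _ hg2 ht2
      have he' : enc (emit2 (w.take 5) b ++ w) t = enc w (b :: t) := rfl
      have he'' : enc (emit2 (w.take 5) b' ++ w) t' = enc w (b' :: t') := rfl
      have key : (u1 ++ emit2 (w.take 5) b) ++ w = (u2 ++ emit2 (w.take 5) b') ++ w := by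
        have e1 : enc w (b :: t) = u1 ++ (emit2 (w.take 5) b ++ w) := by rw [← he', hu1]
        have e2 : enc w (b' :: t') = u2 ++ (emit2 (w.take 5) b' ++ w) := by rw [← he'', hu2]
        rw [← List.append_assoc] at e1 e2
        rw [← e1, ← e2, he]
      have key2 : u1 ++ emit2 (w.take 5) b = u2 ++ emit2 (w.take 5) b' :=
        List.append_cancel_right key
      have hbb : b = b' := by
        obtain ⟨x, y, hx, hy, hxy⟩ := lastFacts T _ hw.1
        by_contra hne
        have hgl : (u1 ++ emit2 (w.take 5) b).getLast? = (u2 ++ emit2 (w.take 5) b').getLast? := by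
          rw [key2]
        rw [List.getLast?_append, List.getLast?_append] at hgl
        cases b <;> cases b' <;> simp_all [hx, hy, Option.or]
      subst hbb
      have hnn : n1 = n2 := by omega
      subst hnn
      have hu12 : u1 = u2 := List.append_cancel_right key2
      have : enc (emit2 (w.take 5) b ++ w) t = enc (emit2 (w.take 5) b ++ w) t' := by
        rw [hu1, hu2, hu12]
      exact congrArg (b :: ·) (ih _ n1 _ t' hg1 ht1 ht2 this)

def seed : List (Fin 3) := [0,1,2,1,0]

lemma good_seed : Good true seed := by constructor <;> decide

lemma card_G_le_IrrCount (n : ℕ) : (G true n).card ≤ IrrCount 3 (n + 5) := by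
  have hfin : {x : List (Fin 3) | x.length = n + 5 ∧ IrreducibleStr 3 x}.Finite :=
    (List.finite_length_eq (Fin 3) (n+5)).subset (fun x hx => hx.1)
  rw [IrrCount, ← Set.ncard_coe_finset]
  refine Set.ncard_le_ncard_of_injOn (fun s => enc seed s) ?_ ?_ hfin
  · intro s hs
    obtain ⟨hirr, u, hu, hlen⟩ := enc_spec s true n seed good_seed (by simpa using hs)
    refine ⟨?_, hirr⟩
    show (enc seed s).length = n + 5
    rw [hu]
    simp [hlen, seed]
  · intro s hs s' hs' h
    exact enc_inj s true n seed s' good_seed (by simpa using hs) (by simpa using hs') h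

lemma card_G_rec (n : ℕ) :
    (G true (n+4)).card = (G true (n+2)).card + ((G true (n+1)).card + (G true n).card) := by
  have hdisj : ∀ (S S' : Finset (List Bool)),
      Disjoint (S.image (false :: ·)) (S'.image (true :: ·)) := by
    intro S S'
    rw [Finset.disjoint_left]
    rintro x hx hx'
    simp only [Finset.mem_image] at hx hx'
    obtain ⟨a, _, ha⟩ := hx
    obtain ⟨a', _, ha'⟩ := hx'
    rw [← ha'] at ha
    simp at ha
  have hcard : ∀ (b : Bool) (S : Finset (List Bool)), (S.image (b :: ·)).card = S.card :=
    fun b S => Finset.card_image_of_injective S (List.cons_injective)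
  have h1 : G true (n+4) = (G false (n+3)).image (false :: ·) ∪ (G true (n+2)).image (true :: ·) := by
    rw [G]
  have h2 : G false (n+3) = (G true (n+1)).image (false :: ·) ∪ (G true n).image (true :: ·) := by
    rw [G]
  have c1 := Finset.card_union_of_disjoint (hdisj (G false (n+3)) (G true (n+2)))
  have c2 := Finset.card_union_of_disjoint (hdisj (G true (n+1)) (G true n))
  rw [h1, c1, hcard, hcard, h2, c2, hcard, hcard]
  omega

lemma card_G_pos : ∀ n ≤ 3, 1 ≤ (G true n).card := by
  intro n hn
  interval_cases n
  · exact Finset.card_pos.2 ⟨[], by rw [G]; simp⟩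
  · exact Finset.card_pos.2 ⟨[false], by rw [G]; simp⟩
  · refine Finset.card_pos.2 ⟨[true], ?_⟩
    show _ ∈ G true (0+2)
    rw [G]
    simp
    rw [G_zero]
    simp
  · refine Finset.card_pos.2 ⟨[true, false], ?_⟩
    show _ ∈ G true (1+2)
    rw [G]
    simp
    rw [G]
    simp

lemma pow_le_card {L : ℝ} (hL1 : 1 < L) (hL : L^3 = L^2 + 1) :
    ∀ n, L^n ≤ L^3 * (G true n).card := by
  intro n
  induction n using Nat.strong_induction_on with
  | _ n ih =>
    match n with
    | 0 =>
      have ha : (1:ℝ) ≤ ((G true 0).card : ℝ) := by exact_mod_cast card_G_pos 0 (by norm_num)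
      nlinarith
    | 1 =>
      have ha : (1:ℝ) ≤ ((G true 1).card : ℝ) := by exact_mod_cast card_G_pos 1 (by norm_num)
      nlinarith
    | 2 =>
      have ha : (1:ℝ) ≤ ((G true 2).card : ℝ) := by exact_mod_cast card_G_pos 2 (by norm_num)
      nlinarith
    | 3 =>
      have ha : (1:ℝ) ≤ ((G true 3).card : ℝ) := by exact_mod_cast card_G_pos 3 (by norm_num)
      nlinarith
    | (m+4) =>
      have i1 := ih (m+2) (by omega)
      have i2 := ih (m+1) (by omega)
      have i3 := ih m (by omega)
      have e := card_G_rec m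
      have hL4 : L^(m+4) = L^(m+2) + L^(m+1) + L^m := by
        have h4 : L^4 = L^2 + L + 1 := by
          have : L^4 = L * L^3 := by ring
          rw [this, hL]
          nlinarith
        calc L^(m+4) = L^m * L^4 := by ring
        _ = L^m * L^2 + L^m * L + L^m * 1 := by rw [h4]; ring
        _ = L^(m+2) + L^(m+1) + L^m := by ring
      rw [e]
      push_cast
      rw [hL4]
      linarith

lemma map_infix_pullback {q : ℕ} (f : Fin 3 → Fin q) {p : List (Fin q)} {l : List (Fin 3)}
    (h : p <:+: l.map f) : ∃ p' : List (Fin 3), p'.map f = p ∧ p' <:+: l := by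
  obtain ⟨s, t, hst⟩ := h
  rw [eq_comm, List.map_eq_append_iff] at hst
  obtain ⟨l₁, l₂, hl, hs, _⟩ := hst
  rw [List.map_eq_append_iff] at hs
  obtain ⟨l₃, l₄, hl₂, _, hp⟩ := hs
  exact ⟨l₄, hp, l₃, l₂, by rw [hl, hl₂]⟩

lemma IrrCount_mono {q : ℕ} (hq : 3 ≤ q) (n : ℕ) : IrrCount 3 n ≤ IrrCount q n := by
  have hinj : Function.Injective (Fin.castLE hq) := Fin.castLE_injective hq
  have hfin : {x : List (Fin q) | x.length = n ∧ IrreducibleStr q x}.Finite :=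
    (List.finite_length_eq (Fin q) n).subset (fun x hx => hx.1)
  refine Set.ncard_le_ncard_of_injOn (fun x => x.map (Fin.castLE hq)) ?_ ?_ hfin
  · rintro x ⟨hlen, h1, h2, h3⟩
    refine ⟨by simp [hlen], ?_, ?_, ?_⟩
    · intro a ha
      obtain ⟨p', hp', hinf⟩ := map_infix_pullback (Fin.castLE hq) ha
      rcases p' with _|⟨x1,_|⟨x2,_|⟨x3,tl⟩⟩⟩ <;> simp only [List.map_cons, List.map_nil,
        List.cons.injEq, and_true, reduceCtorEq, and_false, false_and] at hp'
      obtain ⟨e1, e2⟩ := hp'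
      have : x1 = x2 := hinj (by rw [e1, e2])
      subst this
      exact h1 x1 hinf
    · intro a b hab
      obtain ⟨p', hp', hinf⟩ := map_infix_pullback (Fin.castLE hq) hab
      rcases p' with _|⟨x1,_|⟨x2,_|⟨x3,_|⟨x4,_|⟨x5,tl⟩⟩⟩⟩⟩ <;> simp only [List.map_cons,
        List.map_nil, List.cons.injEq, and_true, reduceCtorEq, and_false, false_and] at hp'
      obtain ⟨e1, e2, e3, e4⟩ := hp'
      have h13 : x1 = x3 := hinj (by rw [e1, e3])
      have h24 : x2 = x4 := hinj (by rw [e2, e4])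
      subst h13; subst h24
      exact h2 x1 x2 hinf
    · intro a b c habc
      obtain ⟨p', hp', hinf⟩ := map_infix_pullback (Fin.castLE hq) habc
      rcases p' with _|⟨x1,_|⟨x2,_|⟨x3,_|⟨x4,_|⟨x5,_|⟨x6,_|⟨x7,tl⟩⟩⟩⟩⟩⟩⟩ <;> simp only
        [List.map_cons, List.map_nil, List.cons.injEq, and_true, reduceCtorEq, and_false,
        false_and] at hp'
      obtain ⟨e1, e2, e3, e4, e5, e6⟩ := hp'
      have h14 : x1 = x4 := hinj (by rw [e1, e4])
      have h25 : x2 = x5 := hinj (by rw [e2, e5])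
      have h36 : x3 = x6 := hinj (by rw [e3, e6])
      subst h14; subst h25; subst h36
      exact h3 x1 x2 x3 hinf
  · intro x _ y _ h
    exact List.map_injective_iff.2 hinj h

end IotaAux

/-- for every `q ≥ 3` and every `β ∈ [0,1]`, `ι_q ≥ H(β)/(1 + 2β)`. -/
theorem iota_ge_entropy_ratio (q : ℕ) (hq : 3 ≤ q) (ι : ℝ)
    (hι : Filter.Tendsto (fun n : ℕ => Real.logb 2 (IrrCount q n) / n)
      Filter.atTop (nhds ι))
    (β : ℝ) (hβ : β ∈ Set.Icc (0 : ℝ) 1) :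
    binH β / (1 + 2 * β) ≤ ι := by
  obtain ⟨hβ0, hβ1⟩ := hβ
  obtain ⟨L, hLIoo, hL0⟩ : ∃ L ∈ Set.Ioo (1:ℝ) 2, L^3 - L^2 - 1 = 0 := by
    have hc : ContinuousOn (fun x : ℝ => x^3 - x^2 - 1) (Set.Icc 1 2) :=
      Continuous.continuousOn (by continuity)
    have h0 : (0:ℝ) ∈ Set.Ioo ((fun x : ℝ => x^3 - x^2 - 1) 1) ((fun x : ℝ => x^3 - x^2 - 1) 2) := by
      norm_num
    obtain ⟨L, hL, hL0⟩ := intermediate_value_Ioo (by norm_num : (1:ℝ) ≤ 2) hc h0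
    exact ⟨L, hL, hL0⟩
  obtain ⟨hL1, hL2⟩ := hLIoo
  have hLroot : L^3 = L^2 + 1 := by linarith
  have hLpos : (0:ℝ) < L := by linarith
  set c := Real.logb 2 L with hcdef
  have hcpos : 0 < c := Real.logb_pos (by norm_num) hL1
  -- Step 1: `c ≤ ι`.
  have hιc : c ≤ ι := by
    have key : ∀ n : ℕ, 13 ≤ n → ((n:ℝ) - 8) * c / n ≤ Real.logb 2 (IrrCount q n) / n := by
      intro n hn
      have h1 : L ^ (n - 8) ≤ ((IrrCount q n : ℕ) : ℝ) := by
        have b1 := IotaAux.pow_le_card hL1 hLroot (n - 5)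
        have b2 : (IotaAux.G true (n-5)).card ≤ IrrCount q n := by
          calc (IotaAux.G true (n-5)).card ≤ IrrCount 3 ((n-5) + 5) :=
                IotaAux.card_G_le_IrrCount (n-5)
            _ = IrrCount 3 n := by congr 1; omega
            _ ≤ IrrCount q n := IotaAux.IrrCount_mono hq n
        have e2 : L^3 * L^(n-8) = L^(n-5) := by rw [← pow_add]; congr 1; omega
        have hL3 : (0:ℝ) < L^3 := by positivity
        have b2' : ((IotaAux.G true (n-5)).card : ℝ) ≤ (IrrCount q n : ℝ) := by exact_mod_cast b2
        nlinarith [b1, b2']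
      have h2 : ((n:ℝ) - 8) * c ≤ Real.logb 2 (IrrCount q n) := by
        have hmono : Real.logb 2 (L^(n-8)) ≤ Real.logb 2 (IrrCount q n) :=
          Real.logb_le_logb_of_le (by norm_num) (by positivity) h1
        rw [Real.logb_pow] at hmono
        have hcast : ((n - 8 : ℕ) : ℝ) = (n:ℝ) - 8 := by
          rw [Nat.cast_sub (by omega)]; norm_num
        rw [hcast] at hmono
        exact hmono
      have hnpos : (0:ℝ) < (n:ℝ) := by
        have : 0 < n := by omega
        exact_mod_cast this
      exact (div_le_div_iff_of_pos_right hnpos).2 h2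
    have hg : Filter.Tendsto (fun n : ℕ => ((n:ℝ) - 8) * c / n) Filter.atTop (nhds c) := by
      have h8 : Filter.Tendsto (fun n : ℕ => (8*c:ℝ) / n) Filter.atTop (nhds 0) :=
        tendsto_const_div_atTop_nhds_zero_nat (8*c)
      have hsub := (tendsto_const_nhds (x := c) (f := Filter.atTop (α := ℕ))).sub h8
      rw [sub_zero] at hsub
      refine Filter.Tendsto.congr' ?_ hsub
      filter_upwards [Filter.eventually_ge_atTop 1] with n hn
      have hne : (n:ℝ) ≠ 0 := by
        have : 0 < n := by omega
        positivity
      field_simp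
    exact le_of_tendsto_of_tendsto hg hι (Filter.eventually_atTop.2 ⟨13, key⟩)
  -- Step 2: `binH β ≤ (1 + 2β) c`.
  have hH : binH β ≤ (1 + 2*β) * c := by
    rcases eq_or_lt_of_le hβ0 with h0 | h0
    · have hz : binH 0 = 0 := by simp [binH]
      rw [← h0, hz]
      nlinarith
    rcases eq_or_lt_of_le hβ1 with h1 | h1
    · have hz : binH 1 = 0 := by simp [binH]
      rw [h1, hz]
      nlinarith
    have hb2 : (0:ℝ) < 1 - β := by linarith
    have hp1 : (0:ℝ) < 1/(L^2*β) := by positivity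
    have hp2 : (0:ℝ) < 1/(1-β) := by positivity
    have am := Real.geom_mean_le_arith_mean2_weighted (le_of_lt h0) (le_of_lt hb2)
      (le_of_lt hp1) (le_of_lt hp2) (by ring)
    have hsum : β * (1/(L^2*β)) + (1-β) * (1/(1-β)) = L := by
      field_simp
      nlinarith [hLroot]
    rw [hsum] at am
    have hr1 : (0:ℝ) < (1/(L^2*β)) ^ β := Real.rpow_pos_of_pos hp1 _
    have hr2 : (0:ℝ) < (1/(1-β)) ^ (1-β) := Real.rpow_pos_of_pos hp2 _
    have hlog := Real.log_le_log (by positivity) am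
    rw [Real.log_mul (ne_of_gt hr1) (ne_of_gt hr2), Real.log_rpow hp1, Real.log_rpow hp2] at hlog
    have e1 : Real.log (1/(L^2*β)) = -(2*Real.log L + Real.log β) := by
      rw [one_div, Real.log_inv, Real.log_mul (by positivity) (ne_of_gt h0), Real.log_pow]
      push_cast
      ring
    have e2 : Real.log (1/(1-β)) = -Real.log (1-β) := by rw [one_div, Real.log_inv]
    rw [e1, e2] at hlog
    have hmain : -β * Real.log β - (1-β) * Real.log (1-β) ≤ (1 + 2*β) * Real.log L := by
      nlinarith [hlog]
    have hlog2 : (0:ℝ) < Real.log 2 := Real.log_pos (by norm_num)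
    have lhs_eq : binH β = (-β * Real.log β - (1-β) * Real.log (1-β)) / Real.log 2 := by
      rw [binH, Real.logb, Real.logb]
      ring
    have rhs_eq : (1 + 2*β) * c = ((1 + 2*β) * Real.log L) / Real.log 2 := by
      rw [hcdef, Real.logb]
      ring
    rw [lhs_eq, rhs_eq]
    exact (div_le_div_iff_of_pos_right hlog2).2 hmain
  have h12 : (0:ℝ) < 1 + 2*β := by linarith
  rw [div_le_iff₀ h12]
  calc binH β ≤ (1 + 2*β) * c := hH
    _ ≤ ι * (1 + 2*β) := by nlinarith
end

section
/- The equation (1 − x)³ = x has a unique positive real solution β̄, this solution lies in the open interval (0,1), and β̄ is the unique maximizer of the function β ↦ H(β)/(1 + 2β) on the interval [0,1]. -/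
/-!
Write `p` for the root. Then `log p = 3 log (1 - p)`, so the cross entropy of a Bernoulli(`β`)
law against Bernoulli(`p`), `-β log p - (1 - β) log (1 - p)`, equals `-log (1 - p) · (1 + 2β)`.
By Gibbs' inequality the entropy `H(β)` is strictly below this cross entropy unless `β = p`,
where they agree; dividing by `1 + 2β` shows that `p` is the unique maximizer.
-/

open Real InformationTheory Set

noncomputable def binCrossEntropy (p β : ℝ) : ℝ := β * log p⁻¹ + (1 - β) * log (1 - p)⁻¹

lemma binCrossEntropy_self (p : ℝ) : binCrossEntropy p p = binEntropy p := rfl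

lemma mul_klFun_div {a b : ℝ} (hb : 0 < b) :
    b * klFun (a / b) = a * log a - a * log b + b - a := by
  rcases eq_or_ne a 0 with rfl | ha
  · simp [klFun]
  rw [klFun, log_div ha hb.ne']
  field_simp

lemma binEntropy_lt_binCrossEntropy {p β : ℝ} (hp₀ : 0 < p) (hp₁ : p < 1) (hβ₀ : 0 ≤ β)
    (hβ₁ : β ≤ 1) (hne : β ≠ p) : binEntropy β < binCrossEntropy p β := by
  -- The gap is `p * klFun (β / p) + (1 - p) * klFun ((1 - β) / (1 - p))`,
  -- and `klFun` vanishes only at `1`.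
  have hq : 0 < 1 - p := sub_pos.2 hp₁
  have h₁ : 0 < klFun (β / p) :=
    (klFun_nonneg (by positivity)).lt_of_ne' fun h =>
      hne ((div_eq_one_iff_eq hp₀.ne').1 ((klFun_eq_zero_iff (by positivity)).1 h))
  have h₂ : 0 ≤ klFun ((1 - β) / (1 - p)) := klFun_nonneg (div_nonneg (by linarith) hq.le)
  have := mul_klFun_div (a := β) hp₀
  have := mul_klFun_div (a := 1 - β) hq
  simp only [binEntropy, binCrossEntropy, log_inv]
  linarith [mul_pos hp₀ h₁, mul_nonneg hq.le h₂]

lemma binCrossEntropy_of_pow_eq {p : ℝ} {n : ℕ} (h : (1 - p) ^ (n + 1) = p) (β : ℝ) :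
    binCrossEntropy p β = -log (1 - p) * (1 + n * β) := by
  have hlog : log p = (n + 1) * log (1 - p) := by
    rw [← Nat.cast_add_one, ← log_pow, h]
  rw [binCrossEntropy, log_inv, log_inv, hlog]
  ring

theorem binEntropy_div_lt_of_pow_eq {p β : ℝ} {n : ℕ} (hp₀ : 0 < p) (hp₁ : p < 1)
    (h : (1 - p) ^ (n + 1) = p) (hβ : β ∈ Icc 0 1) (hne : β ≠ p) :
    binEntropy β / (1 + n * β) < binEntropy p / (1 + n * p) := by
  have hpos : ∀ x : ℝ, 0 ≤ x → 0 < 1 + n * x := fun x hx => by positivity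
  rw [← binCrossEntropy_self p, binCrossEntropy_of_pow_eq h,
    mul_div_cancel_right₀ _ (hpos p hp₀.le).ne', div_lt_iff₀ (hpos β hβ.1),
    ← binCrossEntropy_of_pow_eq h]
  exact binEntropy_lt_binCrossEntropy hp₀ hp₁ hβ.1 hβ.2 hne

lemma binH_eq_binEntropy_div_log_two (β : ℝ) : binH β = binEntropy β / log 2 := by
  simp only [binH, binEntropy, logb, log_inv]
  ring

lemma strictAnti_one_sub_cube_sub_self : StrictAnti fun x : ℝ => (1 - x) ^ 3 - x :=
  fun x y hxy => by
    have : (1 - y) ^ 3 < (1 - x) ^ 3 := Odd.strictMono_pow (by decide) (by linarith)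
    linarith

lemma existsUnique_pos_one_sub_cube_eq : ∃! x : ℝ, 0 < x ∧ (1 - x) ^ 3 = x := by
  obtain ⟨c, hc, hgc⟩ := intermediate_value_Icc' (zero_le_one' ℝ)
    (f := fun x => (1 - x) ^ 3 - x) (by fun_prop) (show (0 : ℝ) ∈ Icc _ _ by norm_num)
  have hroot : (1 - c) ^ 3 = c := sub_eq_zero.1 hgc
  have hc₀ : c ≠ 0 := by rintro rfl; norm_num at hroot
  refine ⟨c, ⟨hc.1.lt_of_ne' hc₀, hroot⟩, fun y hy => ?_⟩
  exact strictAnti_one_sub_cube_sub_self.injective (show (1 - y) ^ 3 - y = (1 - c) ^ 3 - c by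
    rw [hy.2, hroot, sub_self, sub_self])

lemma lt_one_of_one_sub_cube_eq {x : ℝ} (hx : 0 < x) (h : (1 - x) ^ 3 = x) : x < 1 :=
  sub_pos.1 ((Odd.pow_pos_iff (by decide : Odd 3)).1 (h.symm ▸ hx))

/-- the equation `(1 - x)³ = x` has a unique positive real solution `β̄`;
this solution lies in `(0,1)`; and `β̄` is the unique maximizer of `β ↦ H(β)/(1 + 2β)`
on `[0,1]`. -/
theorem unique_root_and_unique_maximizer :
    (∃! x : ℝ, 0 < x ∧ (1 - x) ^ 3 = x) ∧
    ∀ βbar : ℝ, 0 < βbar → (1 - βbar) ^ 3 = βbar →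
      βbar ∈ Set.Ioo (0 : ℝ) 1 ∧
      (∀ β ∈ Set.Icc (0 : ℝ) 1, binH β / (1 + 2 * β) ≤ binH βbar / (1 + 2 * βbar)) ∧
      (∀ β ∈ Set.Icc (0 : ℝ) 1,
        binH β / (1 + 2 * β) = binH βbar / (1 + 2 * βbar) → β = βbar) := by
  refine ⟨existsUnique_pos_one_sub_cube_eq, fun p hp₀ hp => ?_⟩
  have hp₁ := lt_one_of_one_sub_cube_eq hp₀ hp
  have lt_of_ne : ∀ β ∈ Icc (0 : ℝ) 1, β ≠ p → binH β / (1 + 2 * β) < binH p / (1 + 2 * p) :=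
    fun β hβ hne => by
      simpa [binH_eq_binEntropy_div_log_two, div_right_comm _ (log 2)] using
        div_lt_div_of_pos_right (binEntropy_div_lt_of_pow_eq (n := 2) hp₀ hp₁ hp hβ hne)
          (log_pos one_lt_two)
  refine ⟨⟨hp₀, hp₁⟩, fun β hβ => ?_, fun β hβ heq => by_contra fun hne => (lt_of_ne β hβ hne).ne heq⟩
  rcases eq_or_ne β p with rfl | hne
  exacts [le_rfl, (lt_of_ne β hβ hne).le]
end

section
/- Let a, b, c be three distinct symbols of A_q (q ≥ 3). Then the strings a·b·c·a·b·c and a·b·b·c are non-confusable in the (≤3)-tandem-duplication channel: D*(a·b·c·a·b·c) ∩ D*(a·b·b·c) = ∅. -/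
/-!
Every descendant of `a·b·c·a·b·c` contains it as a subsequence, so in each of them some `c`
precedes some `a`. In every descendant of `a·b·b·c`, on the other hand, each `a` stands at least
three positions before each `c`: this holds for `a·b·b·c`, and a duplicated block of length at
most three cannot contain both an `a` and a `c`, so duplicating it neither moves a `c` in front of
an `a` nor brings an `a` and a `c` closer together.
-/

section

open List

theorem List.getElem?_append_dup {α : Type*} (u v w : List α) (p : ℕ) :
    (u ++ v ++ v ++ w)[p]? =
      (u ++ v ++ w)[if p < u.length + v.length then p else p - v.length]? := by
  simp only [List.append_assoc, List.getElem?_append]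
  split_ifs <;> first | omega | rfl | (congr 1; omega)

def SeparatedBy {α : Type*} (a c : α) (n : ℕ) (z : List α) : Prop :=
  ∀ i j, z[i]? = some a → z[j]? = some c → i + n ≤ j

namespace SeparatedBy

variable {α : Type*} {a c : α} {n : ℕ}

theorem append_dup {u v w : List α} (hv : v.length ≤ n)
    (h : SeparatedBy a c n (u ++ v ++ w)) : SeparatedBy a c n (u ++ v ++ v ++ w) := by
  intro i j hi hj
  rw [getElem?_append_dup] at hi hj
  have := h _ _ hi hj
  split_ifs at this <;> omega

theorem not_pair_sublist {z : List α} (h : SeparatedBy a c n z) : ¬ [c, a] <+ z := by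
  rw [sublist_iff_exists_orderEmbedding_getElem?_eq]
  rintro ⟨f, hf⟩
  have := h (f 1) (f 0) (by simpa using (hf 1).symm) (by simpa using (hf 0).symm)
  have := f.lt_iff_lt.2 zero_lt_one
  omega

end SeparatedBy

variable {q : ℕ}

theorem DupStepLen.sublist {k : ℕ} {x y : List (Fin q)} (h : DupStepLen q k x y) : x <+ y := by
  obtain ⟨u, v, w, -, rfl, rfl⟩ := h
  simp

theorem DescL.preserve {P : List (Fin q) → Prop} {ks : List ℕ}
    (hP : ∀ k ∈ ks, ∀ x y, DupStepLen q k x y → P x → P y) {x y : List (Fin q)}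
    (h : DescL q ks x y) (hx : P x) : P y := by
  induction ks generalizing x with
  | nil => exact (h : y = x) ▸ hx
  | cons k ks ih =>
    obtain ⟨z, hxz, hzy⟩ := h
    exact ih (fun k' hk' => hP k' (mem_cons_of_mem k hk')) hzy (hP k mem_cons_self x z hxz hx)

theorem Desc.preserve {P : List (Fin q) → Prop}
    (hP : ∀ k, 1 ≤ k → k ≤ 3 → ∀ x y, DupStepLen q k x y → P x → P y) {x y : List (Fin q)}
    (h : Desc q x y) (hx : P x) : P y := by
  obtain ⟨-, ks, -, hks, hxy⟩ := h
  exact hxy.preserve (fun k hk => hP k (hks k hk).1 (hks k hk).2) hx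

theorem Desc.sublist {x y : List (Fin q)} (h : Desc q x y) : x <+ y :=
  h.preserve (fun _ _ _ _ _ hxy hx => hx.trans hxy.sublist) (Sublist.refl x)

theorem Desc.separatedBy {a c : Fin q} {n : ℕ} (hn : 3 ≤ n) {x y : List (Fin q)}
    (h : Desc q x y) (hx : SeparatedBy a c n x) : SeparatedBy a c n y :=
  h.preserve (fun _ _ hk _ _ ⟨_, _, _, hv, hx, hy⟩ hsep =>
    hy ▸ (hx ▸ hsep).append_dup (hv ▸ hk.trans hn)) hx

end

theorem typeI_typeII_nonconfusable_general (q : ℕ) (a b c : Fin q)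
    (hab : a ≠ b) (hbc : b ≠ c) (hac : a ≠ c) :
    {z | Desc q [a, b, c, a, b, c] z} ∩ {z | Desc q [a, b, b, c] z} = ∅ := by
  refine Set.eq_empty_of_forall_notMem fun z ⟨hI, hII⟩ => ?_
  have hsep : SeparatedBy a c 3 [a, b, b, c] := by
    intro i j hi hj
    rcases i with _ | _ | _ | _ | i <;> rcases j with _ | _ | _ | _ | j <;> simp_all [eq_comm]
  have hca : [c, a].Sublist [a, b, c, a, b, c] := by simp
  exact (hII.separatedBy le_rfl hsep).not_pair_sublist (hca.trans hI.sublist)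

/-- for distinct symbols `a, b, c` of `A_q` (`q ≥ 3`), the strings
`a·b·c·a·b·c` and `a·b·b·c` are non-confusable:
`D*(a·b·c·a·b·c) ∩ D*(a·b·b·c) = ∅`. -/
theorem typeI_typeII_nonconfusable (q : ℕ) (hq : 3 ≤ q) (a b c : Fin q)
    (hab : a ≠ b) (hbc : b ≠ c) (hac : a ≠ c) :
    {z | Desc q [a, b, c, a, b, c] z} ∩ {z | Desc q [a, b, b, c] z} = ∅ :=
  typeI_typeII_nonconfusable_general q a b c hab hbc hac
end

section
/- Let a, b, c be three distinct symbols of A_q. Then: (i) in every string w ∈ D*(a·b·b·c), there are no positions i < j with w_i = c and w_j = a (the symbol a never appears after the symbol c); (ii) in every string w ∈ D*(a·b·c·a·b·c), there exist positions i < j with w_i = c and w_j = a. -/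
/-!
A tandem duplication of length `k` lets each position of the new string point back to a position
of the old one carrying the same letter, through a map that never stretches distances and reverses
the order of two positions by less than `k`. Hence "every `a` lies at least 3 positions before
every `c`" survives duplications of length at most 3; it holds in `a·b·b·c` and rules out a `c`
before an `a`. Conversely, a duplication only inserts letters, so the old string is a subsequence
of the new one, and the subsequence `c·a` of `a·b·c·a·b·c` survives.
-/

open List

theorem List.exists_getElem?_of_pair_sublist {α : Type*} {a b : α} {l : List α}
    (h : [a, b] <+ l) : ∃ i j : ℕ, i < j ∧ l[i]? = some a ∧ l[j]? = some b := by
  obtain ⟨f, hf⟩ := sublist_iff_exists_orderEmbedding_getElem?_eq.mp h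
  exact ⟨f 0, f 1, f.strictMono zero_lt_one, (hf 0).symm, (hf 1).symm⟩

section

variable {q : ℕ}

theorem DescL.preserves {P : List (Fin q) → Prop} {ks : List ℕ}
    (hP : ∀ k ∈ ks, ∀ x y, DupStepLen q k x y → P x → P y) :
    ∀ {x y}, DescL q ks x y → P x → P y := by
  induction ks with
  | nil => rintro x y rfl hx; exact hx
  | cons k ks ih =>
    rintro x y ⟨z, hxz, hzy⟩ hx
    exact ih (fun k' hk' => hP k' (mem_cons_of_mem k hk')) hzy
      (hP k mem_cons_self x z hxz hx)

theorem Desc.preserves {P : List (Fin q) → Prop}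
    (hP : ∀ k ≤ 3, ∀ x y, DupStepLen q k x y → P x → P y) {x y : List (Fin q)}
    (h : Desc q x y) (hx : P x) : P y := by
  obtain ⟨-, ks, -, hks, hxy⟩ := h
  exact DescL.preserves (fun k hk => hP k (hks k hk).2) hxy hx

theorem DupStepLen.exists_index_map {k : ℕ} {x y : List (Fin q)} (h : DupStepLen q k x y) :
    ∃ f : ℕ → ℕ, (∀ i, y[i]? = x[f i]?) ∧ (∀ i j, i ≤ j → f j + i ≤ f i + j) ∧
      ∀ i j, i < j → f i < f j + k := by
  obtain ⟨u, v, w, rfl, rfl, rfl⟩ := h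
  refine ⟨fun i => if i < u.length + v.length then i else i - v.length, fun i => ?_,
    fun i j hij => ?_, fun i j hij => ?_⟩ <;> dsimp only <;> split_ifs <;> try omega
  all_goals simp only [getElem?_append, length_append]
  all_goals split_ifs <;> first | omega | rfl | (congr 1; omega)

def PrecedesBy (a c : Fin q) (n : ℕ) (w : List (Fin q)) : Prop :=
  ∀ i j, w[i]? = some a → w[j]? = some c → i + n ≤ j

theorem DupStepLen.precedesBy {a c : Fin q} {k n : ℕ} (hk : k ≤ n) {x y : List (Fin q)}
    (h : DupStepLen q k x y) (hx : PrecedesBy a c n x) : PrecedesBy a c n y := by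
  obtain ⟨f, hf, hfar, hnear⟩ := h.exists_index_map
  intro i j hi hj
  rw [hf] at hi hj
  have := hx _ _ hi hj
  rcases le_or_gt i j with hij | hji
  · have := hfar i j hij
    omega
  · have := hnear j i hji
    omega

theorem precedesBy_abbc {a b c : Fin q} (hab : a ≠ b) (hbc : b ≠ c) (hac : a ≠ c) :
    PrecedesBy a c 3 [a, b, b, c] := by
  intro i j hi hj
  rcases i with _ | _ | _ | _ | i <;> rcases j with _ | _ | _ | _ | j <;> simp_all

end

/-- for distinct symbols `a, b, c` of `A_q`:
(i) in every `w ∈ D*(a·b·b·c)` the symbol `a` never appears after the symbol `c`;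
(ii) in every `w ∈ D*(a·b·c·a·b·c)` the symbol `a` appears after the symbol `c`. -/
theorem a_after_c_dichotomy (q : ℕ) (a b c : Fin q)
    (hab : a ≠ b) (hbc : b ≠ c) (hac : a ≠ c) :
    (∀ w : List (Fin q), Desc q [a, b, b, c] w →
      ¬ ∃ i j : ℕ, i < j ∧ w[i]? = some c ∧ w[j]? = some a) ∧
    (∀ w : List (Fin q), Desc q [a, b, c, a, b, c] w →
      ∃ i j : ℕ, i < j ∧ w[i]? = some c ∧ w[j]? = some a) := by
  constructor
  · rintro w hw ⟨i, j, hij, hc, ha⟩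
    have := hw.preserves (fun k hk _ _ hxy => hxy.precedesBy hk) (precedesBy_abbc hab hbc hac)
      j i ha hc
    omega
  · intro w hw
    have hca : [c, a] <+ [a, b, c, a, b, c] := by simp
    exact exists_getElem?_of_pair_sublist <|
      hw.preserves (fun _ _ _ _ hxy h => h.trans hxy.sublist) hca
end

section
/- For every q ≥ 3, the polynomial x³ − (q−2)x² − (q−3)x − (q−2) has a unique positive real root r, and the limit ι_q = lim_{n→∞} (1/n) log₂ I_q(n) exists and equals log₂ r. -/
/-!
Classify an irreducible string `x` of length at least five by its first letters: `x₀ = x₂`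
(`aba…`), `x₀ = x₃ ∧ x₁ = x₄` (`abcab…`), `x₀ = x₃ ∧ x₁ ≠ x₄` (`abca…`), or none of these.
A letter `c` can be prepended to an irreducible string unless it is `x₀`, or `x₁` when
`x₀ = x₂`, or `x₂` when `x₀x₁ = x₃x₄`; and the shape of `c :: x` only depends on whether
`c = x₁` or `c = x₂`. Hence prepending acts on shape-weighted counts of irreducible strings by
a `4 × 4` transfer matrix, whose characteristic polynomial is `(x + 1)` times the cubic. For the
positive root `r` this matrix has an eigenvector with positive entries, so the corresponding
weighted count of irreducible strings of length `n ≥ 5` is exactly `C rⁿ`, and `I_q(n)` lies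
between two constant multiples of `rⁿ`.
-/

open Finset Filter Topology

theorem cast_card_compl {α R : Type*} [Fintype α] [DecidableEq α] [AddGroupWithOne R]
    (s : Finset α) : ((sᶜ.card : ℕ) : R) = Fintype.card α - s.card := by
  rw [← card_compl_add_card s, Nat.cast_add, add_sub_cancel_right]

theorem sum_ite_eq_ite_add {α M : Type*} [DecidableEq α] [AddCommGroup M] {s : Finset α}
    {a b : α} (hab : a ≠ b) (A B K : M) :
    ∑ c ∈ s, (if c = a then A else if c = b then B else K) =
      (if a ∈ s then A - K else 0) + (if b ∈ s then B - K else 0) + s.card • K := by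
  have hsplit : ∀ c, (if c = a then A else if c = b then B else K) =
      (if c = a then A - K else 0) + (if c = b then B - K else 0) + K := by
    intro c
    split_ifs <;> simp_all
  simp only [hsplit, sum_add_distrib, sum_ite_eq', sum_const]

theorem tendsto_log_div_of_pow_le_of_le_pow {a : ℕ → ℝ} {r C₁ C₂ : ℝ} (hr : 0 < r) (hC₁ : 0 < C₁)
    (h : ∀ᶠ n in atTop, C₁ * r ^ n ≤ a n ∧ a n ≤ C₂ * r ^ n) :
    Tendsto (fun n : ℕ => Real.log (a n) / n) atTop (𝓝 (Real.log r)) := by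
  have hlim : ∀ C : ℝ, 0 < C →
      Tendsto (fun n : ℕ => Real.log (C * r ^ n) / n) atTop (𝓝 (Real.log r)) := by
    intro C hC
    have := (tendsto_const_div_atTop_nhds_zero_nat (Real.log C)).add_const (Real.log r)
    rw [zero_add] at this
    refine this.congr' ?_
    filter_upwards [eventually_ne_atTop 0] with n hn
    rw [Real.log_mul hC.ne' (pow_pos hr n).ne', Real.log_pow]
    field_simp
  obtain ⟨n, hlow, hhigh⟩ := h.exists
  have hC₂ : 0 < C₂ := pos_of_mul_pos_left ((by positivity : 0 < C₁ * r ^ n).trans_le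
    (hlow.trans hhigh)) (pow_pos hr n).le
  refine tendsto_of_tendsto_of_tendsto_of_le_of_le' (hlim C₁ hC₁) (hlim C₂ hC₂) ?_ ?_ <;>
    filter_upwards [h] with n ⟨hlow, hhigh⟩ <;> gcongr
  exact (by positivity : 0 < C₁ * r ^ n).trans_le hlow

def charCubic (q : ℕ) (x : ℝ) : ℝ :=
  x ^ 3 - ((q : ℝ) - 2) * x ^ 2 - ((q : ℝ) - 3) * x - ((q : ℝ) - 2)

theorem pos_root_unique {q : ℕ} (hq : 3 ≤ q) {r s : ℝ} (hr : 0 < r) (hs : 0 < s)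
    (hroot_r : charCubic q r = 0) (hroot_s : charCubic q s = 0) : r = s := by
  have h3 : (0 : ℝ) ≤ q - 3 := by rw [sub_nonneg]; exact_mod_cast hq
  have h2 : (0 : ℝ) < q - 2 := by linarith
  have hne : ∀ a b : ℝ, 0 < a → a < b → charCubic q a = 0 → charCubic q b ≠ 0 := by
    intro a b ha hab hroot_a hroot_b
    have hb : 0 < b := ha.trans hab
    have hd : 0 < b - a := sub_pos.2 hab
    -- `a³ p(b) - b³ p(a)` for `p = charCubic q`, written as a visibly positive sum
    have hzero : ((q : ℝ) - 2) * (a ^ 2 * b ^ 2 * (b - a)) +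
        ((q : ℝ) - 3) * (a * b * ((b - a) * (b + a))) +
        ((q : ℝ) - 2) * ((b - a) * (b ^ 2 + b * a + a ^ 2)) = 0 := by
      unfold charCubic at hroot_a hroot_b
      linear_combination a ^ 3 * hroot_b - b ^ 3 * hroot_a
    exact (show (0 : ℝ) < _ by positivity).ne' hzero
  exact le_antisymm (not_lt.1 fun h => hne s r hs h hroot_s hroot_r)
    (not_lt.1 fun h => hne r s hr h hroot_r hroot_s)

theorem exists_pos_root {q : ℕ} (hq : 3 ≤ q) : ∃ r : ℝ, 0 < r ∧ charCubic q r = 0 := by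
  have hq' : (3 : ℝ) ≤ q := by exact_mod_cast hq
  have h0 : charCubic q 0 < 0 := by simp only [charCubic]; linarith
  have hq_val : 0 ≤ charCubic q q := by simp only [charCubic]; nlinarith
  have hcont : Continuous (charCubic q) := by unfold charCubic; fun_prop
  obtain ⟨r, ⟨hr0, -⟩, hroot⟩ := intermediate_value_Icc (by linarith : (0 : ℝ) ≤ q)
    hcont.continuousOn (show (0 : ℝ) ∈ Set.Icc (charCubic q 0) (charCubic q q) from
      ⟨h0.le, hq_val⟩)
  exact ⟨r, hr0.lt_of_ne (by rintro rfl; linarith), hroot⟩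

namespace IrreducibleStr

variable {q : ℕ}

theorem of_infix {x y : List (Fin q)} (hy : IrreducibleStr q y) (h : x <:+: y) :
    IrreducibleStr q x :=
  ⟨fun a ha => hy.1 a (ha.trans h), fun a b hab => hy.2.1 a b (hab.trans h),
    fun a b c habc => hy.2.2 a b c (habc.trans h)⟩

theorem tail {c : Fin q} {y : List (Fin q)} (h : IrreducibleStr q (c :: y)) :
    IrreducibleStr q y :=
  h.of_infix (List.suffix_cons c y).isInfix

theorem head_ne {a b : Fin q} {t : List (Fin q)} (h : IrreducibleStr q (a :: b :: t)) :
    a ≠ b := by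
  rintro rfl
  exact h.1 a ⟨[], t, rfl⟩

end IrreducibleStr

theorem irreducibleStr_cons_iff {q : ℕ} (c : Fin q) (y : List (Fin q)) :
    IrreducibleStr q (c :: y) ↔ IrreducibleStr q y ∧
      (∀ a : Fin q, ¬ [a, a] <+: c :: y) ∧
      (∀ a b : Fin q, ¬ [a, b, a, b] <+: c :: y) ∧
      (∀ a b d : Fin q, ¬ [a, b, d, a, b, d] <+: c :: y) := by
  simp only [IrreducibleStr, List.infix_cons_iff, not_or, forall_and]
  tauto

theorem irreducibleStr_cons_iff_ne {q : ℕ} (c y0 y1 y2 y3 y4 : Fin q) (t : List (Fin q)) :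
    IrreducibleStr q (c :: y0 :: y1 :: y2 :: y3 :: y4 :: t) ↔
      IrreducibleStr q (y0 :: y1 :: y2 :: y3 :: y4 :: t) ∧
      c ≠ y0 ∧ (y0 = y2 → c ≠ y1) ∧ (y0 = y3 ∧ y1 = y4 → c ≠ y2) := by
  rw [irreducibleStr_cons_iff]
  simp only [List.cons_prefix_cons, List.nil_prefix, and_true, not_and, forall_eq, ne_eq]
  grind

theorem irreducibleStr_abcab {q : ℕ} {a b c : Fin q} (hab : a ≠ b) (hbc : b ≠ c) (hac : a ≠ c) :
    IrreducibleStr q [a, b, c, a, b] := by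
  refine ⟨fun u hu => ?_, fun u v huv => ?_, fun u v w huvw => ?_⟩ <;>
    simp only [List.infix_cons_iff, List.cons_prefix_cons, List.nil_prefix, List.prefix_nil,
      List.infix_nil, reduceCtorEq, and_true, and_false, or_false] at * <;>
    grind

noncomputable def irreducibles (q n : ℕ) : Finset (List (Fin q)) :=
  ((List.finite_length_eq (Fin q) n).subset fun _ hx => hx.1 :
    {x : List (Fin q) | x.length = n ∧ IrreducibleStr q x}.Finite).toFinset

section Irreducibles

variable {q n : ℕ}

theorem mem_irreducibles {x : List (Fin q)} :
    x ∈ irreducibles q n ↔ x.length = n ∧ IrreducibleStr q x := by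
  simp [irreducibles]

theorem card_irreducibles : (irreducibles q n).card = IrrCount q n :=
  (Set.ncard_eq_toFinset_card _ _).symm

open Classical in
theorem sum_irreducibles_succ {M : Type*} [AddCommMonoid M] (f : List (Fin q) → M) :
    ∑ x ∈ irreducibles q (n + 1), f x =
      ∑ y ∈ irreducibles q n, ∑ c ∈ univ.filter (fun c => IrreducibleStr q (c :: y)),
        f (c :: y) := by
  have hsplit : irreducibles q (n + 1) =
      ((irreducibles q n ×ˢ univ).filter fun p => IrreducibleStr q (p.2 :: p.1)).image
        fun p => p.2 :: p.1 := by
    ext x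
    cases x with
    | nil => simp [mem_irreducibles]
    | cons c y =>
      simp only [mem_irreducibles, mem_image, mem_filter, mem_product, mem_univ, and_true,
        Prod.exists, List.cons.injEq, List.length_cons]
      exact ⟨fun ⟨hlen, h⟩ => ⟨y, c, ⟨⟨by omega, h.tail⟩, h⟩, rfl, rfl⟩,
        by rintro ⟨y, c, ⟨⟨rfl, -⟩, h⟩, rfl, rfl⟩; exact ⟨rfl, h⟩⟩
  rw [hsplit, sum_image, sum_filter, sum_product]
  · simp only [sum_filter]
  · rintro ⟨y, c⟩ - ⟨y', c'⟩ - h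
    simp_all

end Irreducibles

-- `abca` means `x₀ = x₃ ∧ x₁ ≠ x₄`; strings shorter than five letters get the junk shape `generic`.
inductive Shape
  | aba
  | abcab
  | abca
  | generic

def shape {q : ℕ} : List (Fin q) → Shape
  | x0 :: x1 :: x2 :: x3 :: x4 :: _ =>
    if x0 = x2 then .aba else if x0 = x3 then (if x1 = x4 then .abcab else .abca) else .generic
  | _ => .generic

theorem shape_cons {q : ℕ} (c y0 y1 y2 y3 : Fin q) (t : List (Fin q)) :
    shape (c :: y0 :: y1 :: y2 :: y3 :: t) =
      if c = y1 then .aba else if c = y2 then (if y0 = y3 then .abcab else .abca) else .generic :=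
  rfl

namespace Shape

def transfer (q : ℕ) (w : Shape → ℝ) : Shape → ℝ
  | aba => (q - 2) * w generic
  | abcab => (q - 3) * w generic + w aba
  | abca => (q - 3) * w generic + w aba + w abcab
  | generic => (q - 3) * w generic + w aba + w abca

end Shape

open Classical in
theorem sum_shape_cons {q : ℕ} (w : Shape → ℝ) {y0 y1 y2 y3 y4 : Fin q} {t : List (Fin q)}
    (hy : IrreducibleStr q (y0 :: y1 :: y2 :: y3 :: y4 :: t)) :
    ∑ c ∈ univ.filter (fun c => IrreducibleStr q (c :: y0 :: y1 :: y2 :: y3 :: y4 :: t)),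
      w (shape (c :: y0 :: y1 :: y2 :: y3 :: y4 :: t)) =
      Shape.transfer q w (shape (y0 :: y1 :: y2 :: y3 :: y4 :: t)) := by
  have h01 := hy.head_ne
  have h12 := hy.tail.head_ne
  simp only [shape_cons, apply_ite w, sum_ite_eq_ite_add h12, nsmul_eq_mul,
    irreducibleStr_cons_iff_ne, hy, true_and]
  set allowed := univ.filter fun c =>
    c ≠ y0 ∧ (y0 = y2 → c ≠ y1) ∧ (y0 = y3 ∧ y1 = y4 → c ≠ y2) with h_allowed
  by_cases h02 : y0 = y2
  · have hs : allowed = {y0, y1}ᶜ := by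
      ext c; simp only [h_allowed, mem_filter, mem_univ, true_and, mem_compl, mem_insert,
        mem_singleton]
      grind
    rw [hs, if_neg (by simp), if_neg (by simp [h02]), cast_card_compl, card_pair h01,
      Fintype.card_fin, if_pos h02, Shape.transfer]
    ring
  by_cases h3 : y0 = y3 ∧ y1 = y4
  · have hs : allowed = {y0, y2}ᶜ := by
      ext c; simp only [h_allowed, mem_filter, mem_univ, true_and, mem_compl, mem_insert,
        mem_singleton]
      grind
    rw [hs, if_pos (by simp [h01.symm, h12]), if_neg (by simp), cast_card_compl, card_pair h02,
      Fintype.card_fin, if_neg h02, if_pos h3.1, if_pos h3.2, Shape.transfer]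
    ring
  · have hs : allowed = {y0}ᶜ := by
      ext c; simp only [h_allowed, mem_filter, mem_univ, true_and, mem_compl, mem_singleton]
      grind
    rw [hs, if_pos (by simp [h01.symm]), if_pos (by simp [Ne.symm h02]), cast_card_compl,
      card_singleton, Fintype.card_fin]
    by_cases h03 : y0 = y3
    · simp only [if_neg h02, if_pos h03, if_neg (fun h14 => h3 ⟨h03, h14⟩), Shape.transfer]
      ring
    · simp only [if_neg h02, if_neg h03, Shape.transfer]
      ring

namespace Shape

-- The solution of `transfer q w = r • w` with `w generic = 1`: the `generic` component of that
-- equation is `(r + 1)` times the cubic.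
noncomputable def eigenweight (q : ℕ) (r : ℝ) : Shape → ℝ
  | aba => (q - 2) / r
  | abcab => (q - 3 + (q - 2) / r) / r
  | abca => (q - 3 + (q - 2) / r + (q - 3 + (q - 2) / r) / r) / r
  | generic => 1

theorem transfer_eigenweight {q : ℕ} {r : ℝ} (hr : 0 < r) (hroot : charCubic q r = 0)
    (s : Shape) :
    transfer q (eigenweight q r) s = r * eigenweight q r s := by
  unfold charCubic at hroot
  cases s <;> simp only [transfer, eigenweight] <;> field_simp
  linear_combination -(r + 1) * hroot

theorem eigenweight_pos {q : ℕ} (hq : 3 ≤ q) {r : ℝ} (hr : 0 < r) (s : Shape) :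
    0 < eigenweight q r s := by
  have h3 : (0 : ℝ) ≤ q - 3 := by rw [sub_nonneg]; exact_mod_cast hq
  have h2 : (0 : ℝ) < (q - 2) / r := div_pos (by linarith) hr
  cases s <;> simp only [eigenweight] <;> positivity

theorem exists_bounds_of_pos (w : Shape → ℝ) (hw : ∀ s, 0 < w s) :
    ∃ m M, 0 < m ∧ ∀ s, m ≤ w s ∧ w s ≤ M :=
  ⟨min (min (w aba) (w abcab)) (min (w abca) (w generic)),
    max (max (w aba) (w abcab)) (max (w abca) (w generic)), by simp [hw],
    by rintro (_ | _ | _ | _) <;> simp⟩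

end Shape

noncomputable def weightedCount (q : ℕ) (w : Shape → ℝ) (n : ℕ) : ℝ :=
  ∑ x ∈ irreducibles q n, w (shape x)

section WeightedCount

variable {q n : ℕ}

theorem weightedCount_succ (w : Shape → ℝ) (hn : 5 ≤ n) :
    weightedCount q w (n + 1) = weightedCount q (Shape.transfer q w) n := by
  classical
  rw [weightedCount, sum_irreducibles_succ]
  refine sum_congr rfl fun y hy => ?_
  obtain ⟨hlen, hy⟩ := mem_irreducibles.1 hy
  rcases y with _ | ⟨y0, _ | ⟨y1, _ | ⟨y2, _ | ⟨y3, _ | ⟨y4, t⟩⟩⟩⟩⟩ <;>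
    simp only [List.length_cons, List.length_nil] at hlen <;> try omega
  exact sum_shape_cons w hy

theorem weightedCount_bounds {w : Shape → ℝ} {m M : ℝ} (hw : ∀ s, m ≤ w s ∧ w s ≤ M) :
    m * IrrCount q n ≤ weightedCount q w n ∧ weightedCount q w n ≤ M * IrrCount q n := by
  rw [← card_irreducibles, mul_comm, ← nsmul_eq_mul, mul_comm, ← nsmul_eq_mul]
  exact ⟨card_nsmul_le_sum _ _ _ fun _ _ => (hw _).1, sum_le_card_nsmul _ _ _ fun _ _ => (hw _).2⟩

section Eigenweight

variable {r : ℝ} (hr : 0 < r) (hroot : charCubic q r = 0)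
include hr hroot

theorem weightedCount_eigenweight_succ (hn : 5 ≤ n) :
    weightedCount q (Shape.eigenweight q r) (n + 1) =
      r * weightedCount q (Shape.eigenweight q r) n := by
  rw [weightedCount_succ _ hn, weightedCount, weightedCount, mul_sum]
  simp only [Shape.transfer_eigenweight hr hroot]

theorem weightedCount_eigenweight (hn : 5 ≤ n) :
    weightedCount q (Shape.eigenweight q r) n =
      weightedCount q (Shape.eigenweight q r) 5 / r ^ 5 * r ^ n := by
  induction n, hn using Nat.le_induction with
  | base => field_simp
  | succ n hn ih =>
    rw [weightedCount_eigenweight_succ hr hroot hn, ih, pow_succ]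
    ring

end Eigenweight

end WeightedCount

theorem irrCount_five_pos {q : ℕ} (hq : 3 ≤ q) : 0 < IrrCount q 5 := by
  rw [← card_irreducibles, card_pos]
  refine ⟨[⟨0, by omega⟩, ⟨1, by omega⟩, ⟨2, by omega⟩, ⟨0, by omega⟩, ⟨1, by omega⟩],
    mem_irreducibles.2 ⟨rfl, irreducibleStr_abcab ?_ ?_ ?_⟩⟩ <;> simp [Fin.ext_iff]

theorem tendsto_logb_irrCount {q : ℕ} (hq : 3 ≤ q) {r : ℝ} (hr : 0 < r)
    (hroot : charCubic q r = 0) :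
    Tendsto (fun n : ℕ => Real.logb 2 (IrrCount q n) / n) atTop (𝓝 (Real.logb 2 r)) := by
  obtain ⟨m, M, hm, hw⟩ := Shape.exists_bounds_of_pos _ (Shape.eigenweight_pos hq hr)
  have hM : 0 < M := hm.trans_le ((hw .generic).1.trans (hw .generic).2)
  set K := weightedCount q (Shape.eigenweight q r) 5 / r ^ 5 with hK_def
  have hK : 0 < K := by
    have h5 : (0 : ℝ) < IrrCount q 5 := by exact_mod_cast irrCount_five_pos hq
    exact div_pos ((mul_pos hm h5).trans_le (weightedCount_bounds hw).1) (pow_pos hr 5)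
  have hbounds : ∀ᶠ n in atTop,
      K / M * r ^ n ≤ (IrrCount q n : ℝ) ∧ (IrrCount q n : ℝ) ≤ K / m * r ^ n := by
    filter_upwards [eventually_ge_atTop 5] with n hn
    obtain ⟨hlow, hhigh⟩ := weightedCount_bounds (n := n) hw
    rw [weightedCount_eigenweight hr hroot hn, ← hK_def] at hlow hhigh
    constructor
    · rw [div_mul_eq_mul_div, div_le_iff₀ hM]; linarith
    · rw [div_mul_eq_mul_div, le_div_iff₀ hm]; linarith
  have := (tendsto_log_div_of_pow_le_of_le_pow hr (div_pos hK hM) hbounds).div_const (Real.log 2)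
  simpa only [Real.logb, div_right_comm] using this

/-- for every `q ≥ 3`, the polynomial `x³ − (q−2)x² − (q−3)x − (q−2)` has
a unique positive real root `r`, and `ι_q = lim_{n→∞} (1/n) log₂ I_q(n)` exists and
equals `log₂ r`. -/
theorem iota_eq_logb_root (q : ℕ) (hq : 3 ≤ q) :
    (∃! r : ℝ, 0 < r ∧
      r ^ 3 - ((q : ℝ) - 2) * r ^ 2 - ((q : ℝ) - 3) * r - ((q : ℝ) - 2) = 0) ∧
    ∀ r : ℝ, 0 < r →
      r ^ 3 - ((q : ℝ) - 2) * r ^ 2 - ((q : ℝ) - 3) * r - ((q : ℝ) - 2) = 0 →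
      Filter.Tendsto (fun n : ℕ => Real.logb 2 (IrrCount q n) / n)
        Filter.atTop (nhds (Real.logb 2 r)) := by
  obtain ⟨r, hr, hroot⟩ := exists_pos_root hq
  exact ⟨⟨r, ⟨hr, hroot⟩, fun s ⟨hs, hroot_s⟩ => pos_root_unique hq hs hr hroot_s hroot⟩,
    fun r hr hroot => tendsto_logb_irrCount hq hr hroot⟩
end
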